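/- Key restriction lemma from the proof of the PNS(k) lower bounds: for every i ∈ {1,…,k}, the probability of the joint counterfactual event restricted to treatment x_i satisfies P(⋂_{j=1}^{k} {Y_j = j} ∩ {X = i}) ≥ Σ_{1 ≤ j ≤ k, j ≠ i} [ P(Y_j = j) + P(X = j) − P(X = j, Y = j) ] + P(X = i, Y = i) − k + 1. -/

import Mathlib

/-!
On `{X = i}` the event `{Y_j = j}` coincides with `{Y_j = j} ∪ {X = j}` for every `j ≠ i`, so the
restricted joint event contains `{X = i, Y_i = i} ∩ ⋂_{j ≠ i} ({Y_j = j} ∪ {X = j})`. The Bonferroni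
inequality bounds the probability of this intersection from below, and inclusion–exclusion together
with consistency turns `P({Y_j = j} ∪ {X = j})` into `P(y_j^{x_j}) + P(x_j) - P(x_j, y_j)`.
-/

open MeasureTheory Finset

namespace MeasureTheory

variable {Ω ι : Type*} [MeasurableSpace Ω] {P : Measure Ω} [IsZeroOrProbabilityMeasure P]

lemma measureReal_add_measureReal_sub_one_le_inter {s t : Set Ω} (ht : MeasurableSet t) :
    P.real s + P.real t - 1 ≤ P.real (s ∩ t) := by
  have h := measureReal_union_add_inter (μ := P) (s := s) ht
  have hle : P.real (s ∪ t) ≤ 1 := measureReal_le_one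
  linarith

lemma measureReal_add_sum_sub_card_le_inter_biInter [DecidableEq ι] (t : Set Ω) (s : Finset ι)
    {A : ι → Set Ω} (hA : ∀ j ∈ s, MeasurableSet (A j)) :
    P.real t + ∑ j ∈ s, P.real (A j) - #s ≤ P.real (t ∩ ⋂ j ∈ s, A j) := by
  induction s using Finset.induction_on with
  | empty => simp
  | @insert a s ha ih =>
    have hstep := measureReal_add_measureReal_sub_one_le_inter (P := P)
      (s := t ∩ ⋂ j ∈ s, A j) (hA a (mem_insert_self a s))
    have ih := ih fun j hj => hA j (mem_insert_of_mem hj)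
    rw [set_biInter_insert, Set.inter_comm (A a), ← Set.inter_assoc, sum_insert ha,
      card_insert_of_notMem ha]
    push_cast
    linarith

end MeasureTheory

section Counterfactual

variable {Ω ι : Type*} (X : Ω → ι) (Y : ι → Ω → ι)

lemma inter_biInter_union_subset_biInter_inter [DecidableEq ι] {s : Finset ι} {i : ι}
    (hi : i ∈ s) :
    ({ω | X ω = i} ∩ {ω | Y i ω = i}) ∩ ⋂ j ∈ s.erase i, ({ω | Y j ω = j} ∪ {ω | X ω = j}) ⊆
      (⋂ j ∈ s, {ω | Y j ω = j}) ∩ {ω | X ω = i} := by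
  rintro ω ⟨⟨hXi, hYi⟩, hω⟩
  simp only [Set.mem_iInter, mem_erase] at hω
  refine ⟨Set.mem_biInter fun j hj => ?_, hXi⟩
  rcases eq_or_ne j i with rfl | hji
  · exact hYi
  · rcases hω j ⟨hji, hj⟩ with hYj | hXj
    · exact hYj
    · exact absurd (hXi.symm.trans hXj) hji.symm

lemma setOf_treatment_and_observed_eq {Yobs : Ω → ι} (hcons : ∀ ω, Yobs ω = Y (X ω) ω) (j : ι) :
    {ω | X ω = j ∧ Yobs ω = j} = {ω | X ω = j} ∩ {ω | Y j ω = j} := by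
  ext ω
  simp only [Set.mem_ofPred_eq, Set.mem_inter_iff, hcons]
  constructor <;> rintro ⟨rfl, h⟩ <;> exact ⟨rfl, h⟩

lemma measureReal_potential_union_treatment_eq [MeasurableSpace Ω] [MeasurableSpace ι]
    [MeasurableSingletonClass ι] (P : Measure Ω) [IsFiniteMeasure P] {Yobs : Ω → ι}
    (hX : Measurable X) (hcons : ∀ ω, Yobs ω = Y (X ω) ω) (j : ι) :
    P.real ({ω | Y j ω = j} ∪ {ω | X ω = j}) =
      P.real {ω | Y j ω = j} + P.real {ω | X ω = j} - P.real {ω | X ω = j ∧ Yobs ω = j} := by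
  have h := measureReal_union_add_inter (μ := P) (s := {ω | Y j ω = j})
    (t := {ω | X ω = j}) (hX (measurableSet_singleton j))
  rw [setOf_treatment_and_observed_eq X Y hcons, Set.inter_comm]
  linarith

end Counterfactual

theorem pns_k_restriction_lemma_general
    {Ω : Type*} [MeasurableSpace Ω] (P : Measure Ω) [IsProbabilityMeasure P]
    (k : ℕ)
    (X : Ω → ℕ) (Y : ℕ → Ω → ℕ) (Yobs : Ω → ℕ)
    (hX : Measurable X) (hY : ∀ j, Measurable (Y j))
    (hcons : ∀ ω, Yobs ω = Y (X ω) ω) :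
    ∀ i ∈ Finset.Icc 1 k,
      (∑ j ∈ (Finset.Icc 1 k).erase i,
          ((P {ω | Y j ω = j}).toReal + (P {ω | X ω = j}).toReal - (P {ω | X ω = j ∧ Yobs ω = j}).toReal))
        + (P {ω | X ω = i ∧ Yobs ω = i}).toReal - (k : ℝ) + 1 ≤ (P ((⋂ j ∈ Finset.Icc 1 k, {ω | Y j ω = j}) ∩ {ω | X ω = i})).toReal := by
  intro i hi
  have hXm : ∀ j, MeasurableSet {ω | X ω = j} := fun j => hX (measurableSet_singleton j)
  have hYm : ∀ j, MeasurableSet {ω | Y j ω = j} := fun j => hY j (measurableSet_singleton j)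
  have hbonf := measureReal_add_sum_sub_card_le_inter_biInter (P := P)
    ({ω | X ω = i} ∩ {ω | Y i ω = i}) ((Icc 1 k).erase i)
    (A := fun j => {ω | Y j ω = j} ∪ {ω | X ω = j}) fun j _ => (hYm j).union (hXm j)
  have hsub := measureReal_mono (μ := P) (inter_biInter_union_subset_biInter_inter X Y hi)
  have hcard : (#((Icc 1 k).erase i) : ℝ) = k - 1 := by
    rw [cast_card_erase_of_mem hi, Nat.card_Icc, Nat.add_sub_cancel]
  simp only [measureReal_potential_union_treatment_eq X Y P hX hcons, hcard,
    ← setOf_treatment_and_observed_eq X Y hcons] at hbonf hsub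
  simp only [← measureReal_def]
  linarith

theorem pns_k_restriction_lemma
    {Ω : Type*} [MeasurableSpace Ω] (P : Measure Ω) [IsProbabilityMeasure P]
    (n k : ℕ) (hk1 : 1 ≤ k) (hkn : k ≤ n)
    (X : Ω → ℕ) (Y : ℕ → Ω → ℕ) (Yobs : Ω → ℕ)
    (hX : Measurable X) (hY : ∀ j, Measurable (Y j))
    (hXr : ∀ ω, X ω ∈ Finset.Icc 1 n)
    (hYr : ∀ j ω, Y j ω ∈ Finset.Icc 1 n)
    (hcons : ∀ ω, Yobs ω = Y (X ω) ω) :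
    ∀ i ∈ Finset.Icc 1 k,
      (∑ j ∈ (Finset.Icc 1 k).erase i,
          ((P {ω | Y j ω = j}).toReal + (P {ω | X ω = j}).toReal - (P {ω | X ω = j ∧ Yobs ω = j}).toReal))
        + (P {ω | X ω = i ∧ Yobs ω = i}).toReal - (k : ℝ) + 1 ≤ (P ((⋂ j ∈ Finset.Icc 1 k, {ω | Y j ω = j}) ∩ {ω | X ω = i})).toReal :=
  pns_k_restriction_lemma_general P k X Y Yobs hX hY hcons
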